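/- Let N ≥ 2, ρ > 0, ν ∈ ℝ, and set μ = (N − 2)/2. Let F : ℝ → ℝ be twice continuously differentiable on (−1, 1) and satisfy the associated Legendre equation (1 − x²) F''(x) − 2x F'(x) + (ν(ν+1) − μ²/(1 − x²)) F(x) = 0 for all x ∈ (−1, 1). Then the function g(r) = (ρ/r)^{N/2 − 1} · F((r² − ρ²)/(r² + ρ²)) satisfies the radial fish-eye equation g''(r) + ((N − 1)/r) · g'(r) + (4 ν(ν+1) ρ²/(r² + ρ²)²) · g(r) = 0 for all r > 0. -/

import Mathlib

open Real Set Filter Topology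

/-! Write `g = p · (F ∘ x)` with `p r = (ρ/r)^μ` and `x r = (r² - ρ²)/(r² + ρ²)`. The weight
satisfies `p' = -μ p / r`, `p'' = μ(μ+1) p / r²`, and the coordinate satisfies
`1 - x² = r x'` and `x'' + x'/r = -2x (1 - x²)/r²`. Feeding these into the second-order chain
rule, the radial operator with first-order coefficient `(2μ+1)/r` applied to `g` becomes
`p (1 - x²)/r²` times the associated Legendre operator applied to `F` at `x`; the term
`-μ²/(1 - x²)` arises as `μ(μ+1) - (2μ+1)μ = -μ²`. -/

theorem deriv_deriv_mul_comp {p p' x x' F F' : ℝ → ℝ} {s : Set ℝ} {r p'' x'' F'' : ℝ}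
    (hs : s ∈ 𝓝 r) (hp : ∀ t ∈ s, HasDerivAt p (p' t) t) (hx : ∀ t ∈ s, HasDerivAt x (x' t) t)
    (hF : ∀ t ∈ s, HasDerivAt F (F' (x t)) (x t))
    (hp' : HasDerivAt p' p'' r) (hx' : HasDerivAt x' x'' r) (hF' : HasDerivAt F' F'' (x r)) :
    deriv (deriv fun t => p t * F (x t)) r
      = p'' * F (x r) + 2 * p' r * F' (x r) * x' r + p r * (F'' * x' r ^ 2 + F' (x r) * x'') := by
  have hd : deriv (fun t => p t * F (x t))
      =ᶠ[𝓝 r] fun t => p' t * F (x t) + p t * (F' (x t) * x' t) :=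
    eventually_of_mem hs fun t ht => ((hp t ht).mul ((hF t ht).comp t (hx t ht))).deriv
  have hr := mem_of_mem_nhds hs
  have hd' : HasDerivAt (fun t => p' t * F (x t) + p t * (F' (x t) * x' t))
      (p'' * F (x r) + p' r * (F' (x r) * x' r) + (p' r * (F' (x r) * x' r)
        + p r * (F'' * x' r * x' r + F' (x r) * x''))) r :=
    (hp'.mul ((hF r hr).comp r (hx r hr))).add ((hp r hr).mul ((hF'.comp r (hx r hr)).mul hx'))
  rw [hd.deriv_eq, hd'.deriv]
  ring

section ContDiffOn

variable {F : ℝ → ℝ} {U : Set ℝ} {y : ℝ} {n : WithTop ℕ∞}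

theorem ContDiffOn.hasDerivAt_deriv (hF : ContDiffOn ℝ n F U) (hn : n ≠ 0) (hU : IsOpen U)
    (hy : y ∈ U) : HasDerivAt F (deriv F y) y :=
  ((hF.contDiffAt (hU.mem_nhds hy)).differentiableAt hn).hasDerivAt

theorem ContDiffOn.hasDerivAt_deriv_deriv (hF : ContDiffOn ℝ n F U) (hn : 2 ≤ n) (hU : IsOpen U)
    (hy : y ∈ U) : HasDerivAt (deriv F) (deriv (deriv F) y) y :=
  (hF.deriv_of_isOpen hU (m := 1) hn).hasDerivAt_deriv one_ne_zero hU hy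

end ContDiffOn

section PowerWeight

variable {ρ μ t : ℝ}

theorem hasDerivAt_div_rpow (hρ : ρ ≠ 0) (ht : t ≠ 0) :
    HasDerivAt (fun t => (ρ / t) ^ μ) (-μ * (ρ / t) ^ μ / t) t := by
  have hq : HasDerivAt (fun t => ρ / t) (-ρ / t ^ 2) t := by
    simpa [div_eq_mul_inv, neg_div] using (hasDerivAt_inv ht).const_mul ρ
  convert hq.rpow_const (p := μ) (Or.inl (div_ne_zero hρ ht)) using 1
  rw [rpow_sub_one (div_ne_zero hρ ht)]
  field_simp

theorem hasDerivAt_deriv_div_rpow (hρ : ρ ≠ 0) (ht : t ≠ 0) :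
    HasDerivAt (fun t => -μ * (ρ / t) ^ μ / t) (μ * (μ + 1) * (ρ / t) ^ μ / t ^ 2) t := by
  refine (((hasDerivAt_div_rpow (μ := μ) hρ ht).const_mul (-μ)).div
    (hasDerivAt_id' t) ht).congr_deriv ?_
  field_simp
  ring

end PowerWeight

noncomputable def fisheyeCoord (ρ r : ℝ) : ℝ := (r ^ 2 - ρ ^ 2) / (r ^ 2 + ρ ^ 2)

section FisheyeCoord

variable {ρ r : ℝ}

theorem fisheyeCoord_mem_Ioo (hρ : ρ ≠ 0) (hr : r ≠ 0) : fisheyeCoord ρ r ∈ Ioo (-1) 1 := by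
  have hr2 : 0 < r ^ 2 := by positivity
  have hρ2 : 0 < ρ ^ 2 := by positivity
  constructor
  · rw [fisheyeCoord, lt_div_iff₀ (by positivity)]; linarith
  · rw [fisheyeCoord, div_lt_one (by positivity)]; linarith

theorem one_sub_fisheyeCoord_sq (hρ : ρ ≠ 0) :
    1 - fisheyeCoord ρ r ^ 2 = 4 * ρ ^ 2 * r ^ 2 / (r ^ 2 + ρ ^ 2) ^ 2 := by
  have : r ^ 2 + ρ ^ 2 ≠ 0 := by positivity
  rw [fisheyeCoord]
  field_simp
  ring

theorem hasDerivAt_fisheyeCoord (hρ : ρ ≠ 0) :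
    HasDerivAt (fisheyeCoord ρ) (4 * ρ ^ 2 * r / (r ^ 2 + ρ ^ 2) ^ 2) r := by
  have hS : r ^ 2 + ρ ^ 2 ≠ 0 := by positivity
  refine (((hasDerivAt_pow 2 r).sub_const (ρ ^ 2)).div
    ((hasDerivAt_pow 2 r).add_const (ρ ^ 2)) hS).congr_deriv ?_
  field_simp
  ring

theorem hasDerivAt_deriv_fisheyeCoord (hρ : ρ ≠ 0) :
    HasDerivAt (fun r => 4 * ρ ^ 2 * r / (r ^ 2 + ρ ^ 2) ^ 2)
      (4 * ρ ^ 2 * (ρ ^ 2 - 3 * r ^ 2) / (r ^ 2 + ρ ^ 2) ^ 3) r := by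
  have hS : r ^ 2 + ρ ^ 2 ≠ 0 := by positivity
  refine (((hasDerivAt_id' r).const_mul (4 * ρ ^ 2)).div
    (((hasDerivAt_pow 2 r).add_const (ρ ^ 2)).fun_pow 2) (pow_ne_zero 2 hS)).congr_deriv ?_
  field_simp
  ring

end FisheyeCoord

theorem fisheyeOperator_eq_mul_legendreOperator {ρ ν μ r : ℝ} {F : ℝ → ℝ} (hρ : ρ ≠ 0)
    (hr : r ≠ 0) (hF : ContDiffOn ℝ 2 F (Ioo (-1) 1)) :
    deriv (deriv fun t => (ρ / t) ^ μ * F (fisheyeCoord ρ t)) r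
      + (2 * μ + 1) / r * deriv (fun t => (ρ / t) ^ μ * F (fisheyeCoord ρ t)) r
      + 4 * ν * (ν + 1) * ρ ^ 2 / (r ^ 2 + ρ ^ 2) ^ 2 * ((ρ / r) ^ μ * F (fisheyeCoord ρ r))
    = (ρ / r) ^ μ * (4 * ρ ^ 2 / (r ^ 2 + ρ ^ 2) ^ 2) *
      ((1 - fisheyeCoord ρ r ^ 2) * deriv (deriv F) (fisheyeCoord ρ r)
        - 2 * fisheyeCoord ρ r * deriv F (fisheyeCoord ρ r)
        + (ν * (ν + 1) - μ ^ 2 / (1 - fisheyeCoord ρ r ^ 2)) * F (fisheyeCoord ρ r)) := by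
  have hF' : ∀ t ∈ ({0}ᶜ : Set ℝ),
      HasDerivAt F (deriv F (fisheyeCoord ρ t)) (fisheyeCoord ρ t) :=
    fun t ht => hF.hasDerivAt_deriv two_ne_zero isOpen_Ioo (fisheyeCoord_mem_Ioo hρ ht)
  have hd : HasDerivAt (fun t => (ρ / t) ^ μ * F (fisheyeCoord ρ t)) _ r :=
    (hasDerivAt_div_rpow (μ := μ) hρ hr).mul ((hF' r hr).comp r (hasDerivAt_fisheyeCoord hρ))
  rw [deriv_deriv_mul_comp (isOpen_compl_singleton.mem_nhds hr)
    (fun t ht => hasDerivAt_div_rpow hρ ht) (fun t _ => hasDerivAt_fisheyeCoord hρ) hF'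
    (hasDerivAt_deriv_div_rpow hρ hr) (hasDerivAt_deriv_fisheyeCoord hρ)
    (hF.hasDerivAt_deriv_deriv le_rfl isOpen_Ioo (fisheyeCoord_mem_Ioo hρ hr)), hd.deriv,
    one_sub_fisheyeCoord_sq hρ]
  have hS : r ^ 2 + ρ ^ 2 ≠ 0 := by positivity
  rw [fisheyeCoord]
  field_simp
  ring

theorem legendre_substitution_radial_fisheye
    {N : ℕ} (ρ ν μ : ℝ) (hρ : 0 < ρ)
    (hμ : μ = ((N : ℝ) - 2) / 2)
    (F : ℝ → ℝ) (hF : ContDiffOn ℝ 2 F (Set.Ioo (-1 : ℝ) 1))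
    (hLegendre : ∀ x ∈ Set.Ioo (-1 : ℝ) 1,
      (1 - x ^ 2) * deriv (deriv F) x - 2 * x * deriv F x
        + (ν * (ν + 1) - μ ^ 2 / (1 - x ^ 2)) * F x = 0)
    (g : ℝ → ℝ)
    (hg : g = fun r => (ρ / r) ^ ((N : ℝ) / 2 - 1) * F ((r ^ 2 - ρ ^ 2) / (r ^ 2 + ρ ^ 2))) :
    ∀ r : ℝ, 0 < r →
      deriv (deriv g) r + (((N : ℝ) - 1) / r) * deriv g r
        + (4 * ν * (ν + 1) * ρ ^ 2 / (r ^ 2 + ρ ^ 2) ^ 2) * g r = 0 := by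
  intro r hr
  have hexp : (N : ℝ) / 2 - 1 = μ := by rw [hμ]; ring
  have hN : (N : ℝ) - 1 = 2 * μ + 1 := by rw [hμ]; ring
  subst hg
  rw [hexp, hN]
  exact (fisheyeOperator_eq_mul_legendreOperator hρ.ne' hr.ne' hF).trans <| by
    rw [hLegendre _ (fisheyeCoord_mem_Ioo hρ.ne' hr.ne'), mul_zero]
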